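/- Let X be a proper δ-hyperbolic geodesic metric space, x ∈ X, and let γ be a geodesic line with x' a nearest-point projection of x on γ, S := d(γ(0), x). Then there is an orientation of γ such that the concatenation [x,x'] ∪ [x', γ^+] (second piece a subray of γ) is a (1, 4δ)-quasigeodesic, and every geodesic ray ξ from x to γ^+ satisfies d(ξ(S+t), γ(t)) ≤ 76δ for all t ≥ 0. For the opposite orientation, every geodesic ray ξ = [x, γ^−] satisfies d(ξ(S+t), γ(t)) ≤ 2S + 76δ for all t ≥ 0. -/

import Mathlib

open Filter

noncomputable def gromovProd {X : Type*} [MetricSpace X] (x y z : X) : ℝ :=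
  (dist x y + dist x z - dist y z) / 2

def IsDeltaHyperbolic (X : Type*) [MetricSpace X] (δ : ℝ) : Prop :=
  ∀ x y z w : X, min (gromovProd w x y) (gromovProd w y z) - δ ≤ gromovProd w x z

def IsGeodesicSpace (X : Type*) [MetricSpace X] : Prop :=
  ∀ x y : X, ∃ c : ℝ → X, c 0 = x ∧ c (dist x y) = y ∧
    ∀ s ∈ Set.Icc (0 : ℝ) (dist x y), ∀ t ∈ Set.Icc (0 : ℝ) (dist x y),
      dist (c s) (c t) = |s - t|

/-- Two sequences define the same point of the Gromov boundary (based at `x`). -/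
def SeqEquiv {X : Type*} [MetricSpace X] (x : X) (u v : ℕ → X) : Prop :=
  Tendsto (fun p : ℕ × ℕ => gromovProd x (u p.1) (v p.2)) atTop atTop

/-- A geodesic line: an isometric embedding `ℝ → X`. -/
def IsGeodLine {X : Type*} [MetricSpace X] (γ : ℝ → X) : Prop :=
  ∀ s t : ℝ, dist (γ s) (γ t) = |s - t|

/-- A geodesic ray from `x`. -/
def IsRay {X : Type*} [MetricSpace X] (x : X) (ξ : ℝ → X) : Prop :=
  ξ 0 = x ∧ ∀ s t : ℝ, 0 ≤ s → 0 ≤ t → dist (ξ s) (ξ t) = |s - t|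

/-- Concatenation of a path `c` (used on `[0,d]`) with a path `γ'` (shifted to start at
parameter `d`). -/
noncomputable def concatPath {X : Type*} (d : ℝ) (c γ' : ℝ → X) : ℝ → X :=
  fun u => if u ≤ d then c u else γ' (u - d)

lemma gromov_chain {X : Type*} [MetricSpace X] {δ : ℝ} (hδ : 0 ≤ δ)
    (hyp : IsDeltaHyperbolic X δ) (w a b c d : X) :
    min (gromovProd w a b) (min (gromovProd w b c) (gromovProd w c d)) - 2 * δ ≤
      gromovProd w a d := by
  have h1 := hyp b c d w
  have h2 := hyp a b d w
  have h3 : min (gromovProd w a b) (min (gromovProd w b c) (gromovProd w c d)) - δ ≤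
      min (gromovProd w a b) (gromovProd w b d) := by
    refine le_min ?_ ?_
    · have := min_le_left (gromovProd w a b) (min (gromovProd w b c) (gromovProd w c d))
      linarith
    · have := min_le_right (gromovProd w a b) (min (gromovProd w b c) (gromovProd w c d))
      linarith
  linarith

lemma proj_ineq {X : Type*} [MetricSpace X] {δ : ℝ} (hδ : 0 ≤ δ)
    (hyp : IsDeltaHyperbolic X δ) (x : X) (γ : ℝ → X) (hγ : IsGeodLine γ)
    (t' : ℝ) (hproj : ∀ u : ℝ, dist x (γ t') ≤ dist x (γ u)) (u : ℝ) :
    dist x (γ t') + |u - t'| ≤ dist x (γ u) + 4 * δ := by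
  set a := gromovProd (γ t') x (γ u) with ha
  have hP : dist (γ t') (γ u) = |u - t'| := by rw [hγ, abs_sub_comm]
  have ha' : a = (dist x (γ t') + |u - t'| - dist x (γ u)) / 2 := by
    rw [ha]; unfold gromovProd; rw [dist_comm (γ t') x, hP]
  have ha0 : 0 ≤ a := by
    have := dist_triangle x (γ t') (γ u)
    rw [hP] at this; linarith [ha']
  have haP : a ≤ |u - t'| := by
    have := dist_triangle x (γ u) (γ t')
    rw [dist_comm (γ u) (γ t'), hP] at this; linarith [ha']
  set s : ℝ := if t' ≤ u then 1 else -1 with hs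
  have hs1 : |s| = 1 := by by_cases h : t' ≤ u <;> simp [hs, h]
  have hsu : s * (u - t') = |u - t'| := by
    by_cases h : t' ≤ u
    · simp only [hs, if_pos h, one_mul]; rw [abs_of_nonneg (by linarith)]
    · push_neg at h
      simp only [hs, if_neg (not_le.mpr h)]
      rw [abs_of_nonpos (by linarith)]; ring
  have hm1 : dist (γ (t' + s * a)) (γ t') = a := by
    rw [hγ, show t' + s * a - t' = s * a by ring, abs_mul, hs1, one_mul,
      abs_of_nonneg ha0]
  have hss : s * s = 1 := by by_cases h : t' ≤ u <;> simp [hs, h]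
  have hm2 : dist (γ (t' + s * a)) (γ u) = |u - t'| - a := by
    rw [hγ, show t' + s * a - u = s * (a - s * (u - t')) by
        rw [mul_sub, ← mul_assoc, hss, one_mul]; ring
      , hsu, abs_mul, hs1, one_mul, abs_of_nonpos (by linarith)]
    ring
  have hm3 : dist x (γ t') ≤ dist x (γ (t' + s * a)) := hproj _
  have h4 := hyp (γ t') x (γ u) (γ (t' + s * a))
  have hG3 : gromovProd (γ (t' + s * a)) (γ t') (γ u) = 0 := by
    unfold gromovProd; rw [hm1, hm2, hP]; ring
  have hG1 : a / 2 ≤ gromovProd (γ (t' + s * a)) (γ t') x := by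
    unfold gromovProd
    rw [hm1, dist_comm (γ (t' + s * a)) x, dist_comm (γ t') x]
    linarith
  have hG2 : a / 2 ≤ gromovProd (γ (t' + s * a)) x (γ u) := by
    unfold gromovProd
    rw [dist_comm (γ (t' + s * a)) x, hm2]
    linarith [ha', hm3]
  have hmin := le_min hG1 hG2
  rw [hG3] at h4
  have : a ≤ 2 * δ := by linarith
  linarith [ha']

lemma ray_close_aux {X : Type*} [MetricSpace X] {δ : ℝ} (hδ : 0 ≤ δ)
    (hyp : IsDeltaHyperbolic X δ) (x : X) (ξ : ℝ → X) (hξ : IsRay x ξ)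
    (β : ℝ → X) (hβ : ∀ s t : ℝ, dist (β s) (β t) = |s - t|)
    (hse : SeqEquiv x (fun n => ξ n) (fun n => β n))
    (K u0 T t : ℝ) (hK : ∀ u : ℝ, u0 ≤ u → u + K - 4 * δ ≤ dist x (β u))
    (hT : 0 ≤ T) (ht : 0 ≤ t) :
    dist (ξ T) (β t) ≤ T + dist x (β t)
      - 2 * min T ((K + dist x (β t) + t) / 2 - 2 * δ) + 4 * δ := by
  obtain ⟨hξ0, hξd⟩ := hξ
  have hxξ : ∀ r : ℝ, 0 ≤ r → dist x (ξ r) = r := by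
    intro r hr
    rw [← hξ0, hξd 0 r le_rfl hr, abs_of_nonpos (by linarith)]
    ring
  have hse' : Tendsto (fun p : ℕ × ℕ => gromovProd x (ξ p.1) (β p.2)) atTop atTop := hse
  obtain ⟨N, hN2, hN1⟩ : ∃ n : ℕ, max T (max t u0) ≤ (n : ℝ) ∧
      T ≤ gromovProd x (ξ n) (β n) := by
    have hev := hse'.eventually_ge_atTop T
    rw [Filter.eventually_atTop] at hev
    obtain ⟨⟨a1, a2⟩, ha⟩ := hev
    obtain ⟨m, hm⟩ := exists_nat_ge (max T (max t u0))
    refine ⟨max m (max a1 a2), le_trans hm ?_, ?_⟩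
    · exact_mod_cast Nat.cast_le.mpr (le_max_left _ _)
    · exact ha (max m (max a1 a2), max m (max a1 a2))
        ⟨le_trans (le_max_left a1 a2) (le_max_right _ _),
         le_trans (le_max_right a1 a2) (le_max_right _ _)⟩
  have hNT : T ≤ (N : ℝ) := le_trans (le_max_left _ _) hN2
  have hNt : t ≤ (N : ℝ) :=
    le_trans (le_trans (le_max_left _ _) (le_max_right T _)) hN2
  have hNu0 : u0 ≤ (N : ℝ) :=
    le_trans (le_trans (le_max_right _ _) (le_max_right T _)) hN2
  have hN0 : (0 : ℝ) ≤ (N : ℝ) := Nat.cast_nonneg N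
  have h1 : gromovProd x (ξ T) (ξ N) = T := by
    unfold gromovProd
    rw [hxξ T hT, hxξ N hN0, hξd T N hT hN0, abs_of_nonpos (by linarith)]
    ring
  have h3 : (K + dist x (β t) + t) / 2 - 2 * δ ≤ gromovProd x (β N) (β t) := by
    unfold gromovProd
    rw [hβ N t, abs_of_nonneg (by linarith)]
    have := hK N hNu0
    linarith
  have hch := gromov_chain hδ hyp x (ξ T) (ξ N) (β N) (β t)
  have hmin : min T ((K + dist x (β t) + t) / 2 - 2 * δ) ≤
      min (gromovProd x (ξ T) (ξ N))
        (min (gromovProd x (ξ N) (β N)) (gromovProd x (β N) (β t))) := by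
    refine le_min ?_ (le_min ?_ ?_)
    · rw [h1]; exact min_le_left _ _
    · exact le_trans (min_le_left _ _) hN1
    · exact le_trans (min_le_right _ _) h3
  have hdz : dist (ξ T) (β t) = T + dist x (β t) - 2 * gromovProd x (ξ T) (β t) := by
    unfold gromovProd
    rw [hxξ T hT]
    ring
  linarith

/-- Let `X` be a proper `δ`-hyperbolic geodesic space, `x ∈ X`, `γ` a
geodesic line, `x' = γ(t')` a nearest-point projection of `x` on `γ`, and
`S = d(γ(0), x)`. Then there is an orientation `ε = ±1` of `γ` such that: the
concatenation `[x,x'] ∪ [x', γ⁺]` is a `(1,4δ)`-quasigeodesic; every geodesic ray `ξ`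
from `x` asymptotic to `γ⁺` satisfies `d(ξ(S+t), γ(t)) ≤ 76δ` for all `t ≥ 0`; and for
the opposite orientation, every geodesic ray `ξ = [x, γ⁻]` satisfies
`d(ξ(S+t), γ(t)) ≤ 2S + 76δ` for all `t ≥ 0`. -/
theorem projection_orientation_quasigeodesic {X : Type*} [MetricSpace X] [ProperSpace X]
    (δ : ℝ) (hδ : 0 ≤ δ) (hyp : IsDeltaHyperbolic X δ) (hgeo : IsGeodesicSpace X)
    (x : X) (γ : ℝ → X) (hγ : IsGeodLine γ) (x' : X) (t' : ℝ) (hx' : γ t' = x')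
    (hproj : dist x x' = Metric.infDist x (Set.range γ)) :
    ∃ ε : ℝ, (ε = 1 ∨ ε = -1) ∧
      -- the concatenation `[x,x'] ∪ [x', γ⁺]` is a (1,4δ)-quasigeodesic
      (∀ c : ℝ → X, c 0 = x → c (dist x x') = x' →
        (∀ s ∈ Set.Icc (0 : ℝ) (dist x x'), ∀ t ∈ Set.Icc (0 : ℝ) (dist x x'),
          dist (c s) (c t) = |s - t|) →
        ∀ s t : ℝ, 0 ≤ s → 0 ≤ t →
          |s - t| - 4 * δ ≤
              dist (concatPath (dist x x') c (fun u => γ (t' + ε * u)) s)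
                (concatPath (dist x x') c (fun u => γ (t' + ε * u)) t) ∧
            dist (concatPath (dist x x') c (fun u => γ (t' + ε * u)) s)
                (concatPath (dist x x') c (fun u => γ (t' + ε * u)) t) ≤
              |s - t| + 4 * δ) ∧
      -- every geodesic ray from `x` to `γ⁺` is 76δ-close to `γ` at matching times
      (∀ ξ : ℝ → X, IsRay x ξ → SeqEquiv x (fun n => ξ n) (fun n => γ (ε * n)) →
        ∀ t : ℝ, 0 ≤ t → dist (ξ (dist (γ 0) x + t)) (γ (ε * t)) ≤ 76 * δ) ∧
      -- for the opposite orientation, rays `[x, γ⁻]` are (2S + 76δ)-close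
      (∀ ξ : ℝ → X, IsRay x ξ → SeqEquiv x (fun n => ξ n) (fun n => γ (-ε * n)) →
        ∀ t : ℝ, 0 ≤ t →
          dist (ξ (dist (γ 0) x + t)) (γ (-ε * t)) ≤ 2 * dist (γ 0) x + 76 * δ) := by
  have hp : ∀ u : ℝ, dist x (γ t') ≤ dist x (γ u) := by
    intro u
    rw [hx', hproj]
    exact Metric.infDist_le_dist_of_mem ⟨u, rfl⟩
  have hPI : ∀ u : ℝ, dist x x' + |u - t'| ≤ dist x (γ u) + 4 * δ := by
    intro u
    rw [← hx']
    exact proj_ineq hδ hyp x γ hγ t' hp u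
  set ε : ℝ := if t' ≤ 0 then 1 else -1 with hε
  have hε1 : ε = 1 ∨ ε = -1 := by by_cases h : t' ≤ 0 <;> simp [hε, h]
  have habs : ∀ r : ℝ, |ε * r| = |r| := by
    intro r; rcases hε1 with h | h <;> rw [h] <;> simp
  have habs2 : ∀ r : ℝ, 0 ≤ r → |ε * r - t'| = r + |t'| := by
    intro r hr
    by_cases h : t' ≤ 0
    · simp only [hε, if_pos h, one_mul]
      rw [abs_of_nonneg (by linarith), abs_of_nonpos h]; ring
    · push_neg at h
      simp only [hε, if_neg (not_le.mpr h)]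
      rw [show (-1 : ℝ) * r - t' = -(r + t') by ring, abs_neg,
        abs_of_nonneg (by linarith), abs_of_pos h]
  have habs3 : ∀ r : ℝ, |t'| ≤ r → |-ε * r - t'| = r - |t'| := by
    intro r hr
    by_cases h : t' ≤ 0
    · simp only [hε, if_pos h]
      rw [abs_of_nonpos h] at hr ⊢
      rw [show -(1 : ℝ) * r - t' = -(r + t') by ring, abs_neg,
        abs_of_nonneg (by linarith)]; ring
    · push_neg at h
      simp only [hε, if_neg (not_le.mpr h)]
      rw [abs_of_pos h] at hr ⊢
      rw [show -(-1 : ℝ) * r - t' = r - t' by ring, abs_of_nonneg (by linarith)]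
  have hS1 : dist (γ 0) x ≤ dist x x' + |t'| := by
    have h := dist_triangle (γ 0) (γ t') x
    rw [hγ 0 t', hx', dist_comm x' x, show |(0 : ℝ) - t'| = |t'| by rw [zero_sub, abs_neg]]
      at h
    linarith
  have hS2 : dist x x' + |t'| ≤ dist (γ 0) x + 4 * δ := by
    have h := hPI 0
    rw [show |(0 : ℝ) - t'| = |t'| by rw [zero_sub, abs_neg], dist_comm x (γ 0)] at h
    exact h
  refine ⟨ε, hε1, ?_, ?_, ?_⟩
  · -- quasigeodesic
    intro c hc0 hcd hc s t hs ht
    have key : ∀ a b : ℝ, 0 ≤ a → a ≤ dist x x' → ¬ b ≤ dist x x' →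
        |a - b| - 4 * δ ≤ dist (c a) (γ (t' + ε * (b - dist x x'))) ∧
        dist (c a) (γ (t' + ε * (b - dist x x'))) ≤ |a - b| + 4 * δ := by
      intro a b ha hab hb
      push_neg at hb
      have hca : dist x (c a) = a := by
        have h := hc 0 ⟨le_rfl, dist_nonneg⟩ a ⟨ha, hab⟩
        rw [hc0, abs_of_nonpos (by linarith)] at h
        rw [h]; ring
      have hcax' : dist (c a) x' = dist x x' - a := by
        have h := hc a ⟨ha, hab⟩ (dist x x') ⟨dist_nonneg, le_rfl⟩
        rw [hcd, abs_of_nonpos (by linarith)] at h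
        rw [h]; ring
      have hx'p : dist x' (γ (t' + ε * (b - dist x x'))) = b - dist x x' := by
        have h := hγ t' (t' + ε * (b - dist x x'))
        rw [hx', show t' - (t' + ε * (b - dist x x')) = ε * (-(b - dist x x'))
          by ring, habs, abs_neg, abs_of_nonneg (by linarith)] at h
        exact h
      have habst : |a - b| = b - a := by rw [abs_of_nonpos (by linarith)]; ring
      constructor
      · have h1 := hPI (t' + ε * (b - dist x x'))
        rw [show t' + ε * (b - dist x x') - t' = ε * (b - dist x x') by ring, habs,
          abs_of_nonneg (by linarith)] at h1
        have h3 := dist_triangle x (c a) (γ (t' + ε * (b - dist x x')))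
        rw [hca] at h3
        linarith
      · have h4 := dist_triangle (c a) x' (γ (t' + ε * (b - dist x x')))
        rw [hcax', hx'p] at h4
        linarith
    by_cases hsd : s ≤ dist x x' <;> by_cases htd : t ≤ dist x x'
    · simp only [concatPath, if_pos hsd, if_pos htd]
      rw [hc s ⟨hs, hsd⟩ t ⟨ht, htd⟩]
      constructor <;> linarith
    · simp only [concatPath, if_pos hsd, if_neg htd]
      exact key s t hs hsd htd
    · simp only [concatPath, if_neg hsd, if_pos htd]
      rw [dist_comm, abs_sub_comm]
      exact key t s ht htd hsd
    · simp only [concatPath, if_neg hsd, if_neg htd]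
      rw [hγ, show t' + ε * (s - dist x x') - (t' + ε * (t - dist x x')) = ε * (s - t)
        by ring, habs]
      constructor <;> linarith
  · -- positive direction
    intro ξ hξ hse t ht
    have hK : ∀ u : ℝ, (0 : ℝ) ≤ u → u + (dist x x' + |t'|) - 4 * δ ≤
        dist x (γ (ε * u)) := by
      intro u hu
      have h := hPI (ε * u)
      rw [habs2 u hu] at h
      linarith
    have haux := ray_close_aux hδ hyp x ξ hξ (fun u => γ (ε * u))
      (fun a b => by
        rw [hγ,
          show ε * a - ε * b = ε * (a - b) by ring, habs])
      hse (dist x x' + |t'|) 0 (dist (γ 0) x + t) t hK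
      (by positivity) ht
    have hA_ub : dist x (γ (ε * t)) ≤ dist (γ 0) x + t + 4 * δ := by
      have h := dist_triangle x x' (γ (ε * t))
      have h2 : dist x' (γ (ε * t)) = t + |t'| := by
        have h2' := hγ t' (ε * t)
        rw [hx', abs_sub_comm, habs2 t ht] at h2'
        exact h2'
      linarith
    have hA_lb : dist (γ 0) x + t - 4 * δ ≤ dist x (γ (ε * t)) := by
      have := hK t ht
      linarith
    have hQ : dist (γ 0) x + t - 4 * δ ≤
        ((dist x x' + |t'|) + dist x (γ (ε * t)) + t) / 2 - 2 * δ := by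
      linarith
    have hmin : dist (γ 0) x + t - 4 * δ ≤
        min (dist (γ 0) x + t)
          (((dist x x' + |t'|) + dist x (γ (ε * t)) + t) / 2 - 2 * δ) :=
      le_min (by linarith) hQ
    linarith
  · -- negative direction
    intro ξ hξ hse t ht
    have hK : ∀ u : ℝ, |t'| ≤ u → u + (dist x x' - |t'|) - 4 * δ ≤
        dist x (γ (-ε * u)) := by
      intro u hu
      have h := hPI (-ε * u)
      rw [habs3 u hu] at h
      linarith
    have haux := ray_close_aux hδ hyp x ξ hξ (fun u => γ (-ε * u))
      (fun a b => by
        rw [hγ,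
          show -ε * a - -ε * b = -(ε * (a - b)) by ring, abs_neg, habs])
      hse (dist x x' - |t'|) |t'| (dist (γ 0) x + t) t hK
      (by positivity) ht
    have hA_ub : dist x (γ (-ε * t)) ≤ dist (γ 0) x + t := by
      have h := dist_triangle x (γ 0) (γ (-ε * t))
      have h2 : dist (γ 0) (γ (-ε * t)) = t := by
        rw [hγ, show (0 : ℝ) - -ε * t = ε * t by ring, habs, abs_of_nonneg ht]
      rw [dist_comm x (γ 0)] at h
      linarith
    rcases le_total (dist (γ 0) x + t)
        (((dist x x' - |t'|) + dist x (γ (-ε * t)) + t) / 2 - 2 * δ) with h | h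
    · rw [min_eq_left h] at haux
      linarith [dist_nonneg (x := γ 0) (y := x)]
    · rw [min_eq_right h] at haux
      linarith [dist_nonneg (x := x) (y := x'), abs_nonneg t']
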